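/- arXiv:1807.10017 — 2 statements merged into one kernel-verified Lean document; each statement's English description precedes it below -/
import Mathlib

section
/- There exists C>0 such that for every integer n≥2 and every x∈[0,1]: |F(a_n,b_n;n+1;x)−1|≤C·ln n/n; 1≤F(a_n+1,b_n;n+2;x)≤C·n; and |F(a_n,b_n;n+3;x)−1|≤C·ln n/n. -/
open MeasureTheory Real Set

/-- Rising factorial (Pochhammer symbol) `(a)_k`. -/
noncomputable def poch (a : ℝ) (k : ℕ) : ℝ := (ascPochhammer ℝ k).eval a

/-- Gauss hypergeometric function `F(a,b;c;x)`: given by Euler's integral representation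
when `c > b > 0` (valid for all `x ∈ (-∞,1]`), and by the defining power series otherwise. -/
noncomputable def hyper (a b c x : ℝ) : ℝ :=
  if b < c ∧ 0 < b then
    Real.Gamma c / (Real.Gamma b * Real.Gamma (c - b)) *
      ∫ t in (0:ℝ)..1, t ^ (b - 1) * (1 - t) ^ (c - b - 1) * (1 - x * t) ^ (-a)
  else
    ∑' k : ℕ, poch a k * poch b k / (poch c k * (Nat.factorial k)) * x ^ k

/-- The coefficient `a_t = (t - √(t²+8))/2`. -/
noncomputable def aCoef (t : ℝ) : ℝ := (t - Real.sqrt (t ^ 2 + 8)) / 2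

/-- The coefficient `b_t = (t + √(t²+8))/2`. -/
noncomputable def bCoef (t : ℝ) : ℝ := (t + Real.sqrt (t ^ 2 + 8)) / 2

/-- `F_t(x) = F(a_t, b_t; t+1; x)`. -/
noncomputable def Fhyp (t x : ℝ) : ℝ := hyper (aCoef t) (bCoef t) (t + 1) x

/-- The dispersion function `ζ_n` associated with the quadratic profile `f₀(r) = Ar² + B`. -/
noncomputable def zetaDisp (A B : ℝ) (n : ℕ) (x : ℝ) : ℝ :=
  Fhyp n x * (1 - x + (A + 2 * B) / (A * ((n : ℝ) + 1)) * x)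
    + ∫ τ in (0:ℝ)..1, Fhyp n (τ * x) * τ ^ n * (-1 + 2 * x * τ)

/-!
For `c > b > 0`, Euler's integral exhibits `F(a,b;c;x)` as the mean of `(1 - x t)^(-a)` against
the beta density with parameters `(b, c - b)`. For `x ∈ [0,1]` that factor lies between `1` and
`(1 - t)^(-a)`, so `F(a,b;c;x)` lies between `1` and Gauss's value
`F(a,b;c;1) = Γ(c) Γ(c-a-b) / (Γ(c-a) Γ(c-b))`.

Here `a_n + b_n = n` and `-2/n < a_n < 0`. The log-convexity bound `Γ(x+s) ≤ Γ(x) x^s`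
(`0 ≤ s ≤ 1`) shows that Gauss's value is at least `(1 + a_n) c^(a_n) ≥ 1 + a_n (1 + log c)`
for `c = n+1, n+3`, and at most `2(n+1)` for `F(a_n+1, b_n; n+2; ·)`.
-/

open ProbabilityTheory (beta beta_pos beta_eq_betaIntegralReal)

lemma betaIntegrand_eq_re {u v t : ℝ} (ht : t ∈ Icc (0:ℝ) 1) :
    t ^ (u - 1) * (1 - t) ^ (v - 1)
      = RCLike.re ((t : ℂ) ^ ((u : ℂ) - 1) * (1 - (t : ℂ)) ^ ((v : ℂ) - 1)) := by
  rw [← Complex.ofReal_one, ← Complex.ofReal_sub, ← Complex.ofReal_sub,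
    ← Complex.ofReal_sub,
    ← Complex.ofReal_cpow ht.1, ← Complex.ofReal_cpow (sub_nonneg.2 ht.2),
    ← Complex.ofReal_mul, RCLike.re_to_complex, Complex.ofReal_re]

lemma intervalIntegrable_betaIntegrand {u v : ℝ} (hu : 0 < u) (hv : 0 < v) :
    IntervalIntegrable (fun t : ℝ => t ^ (u - 1) * (1 - t) ^ (v - 1)) volume 0 1 := by
  have h := (Complex.betaIntegral_convergent (u := u) (v := v) (by simpa) (by simpa)).1.re
  rw [intervalIntegrable_iff_integrableOn_Ioc_of_le zero_le_one]
  exact IntegrableOn.congr_fun (μ := volume) h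
    (fun t ht => (betaIntegrand_eq_re (Ioc_subset_Icc_self ht)).symm) measurableSet_Ioc

lemma integral_betaIntegrand {u v : ℝ} (hu : 0 < u) (hv : 0 < v) :
    ∫ t in (0:ℝ)..1, t ^ (u - 1) * (1 - t) ^ (v - 1) = beta u v := by
  rw [beta_eq_betaIntegralReal u v hu hv, Complex.betaIntegral, ← RCLike.re_to_complex,
    ← intervalIntegral.intervalIntegral_re
      (Complex.betaIntegral_convergent (by simpa) (by simpa))]
  exact intervalIntegral.integral_congr fun t ht =>
    betaIntegrand_eq_re (by rwa [uIcc_of_le zero_le_one] at ht)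

lemma betaIntegrand_nonneg {b d t : ℝ} (ht : t ∈ Ioo (0:ℝ) 1) :
    0 ≤ t ^ (b - 1) * (1 - t) ^ d :=
  mul_nonneg (rpow_nonneg ht.1.le _) (rpow_nonneg (sub_nonneg.2 ht.2.le) _)

lemma betaIntegrand_mul_one_sub_rpow {a b c t : ℝ} (ht : t < 1) :
    t ^ (b - 1) * (1 - t) ^ (c - b - 1) * (1 - t) ^ (-a)
      = t ^ (b - 1) * (1 - t) ^ (c - a - b - 1) := by
  rw [mul_assoc, ← rpow_add (sub_pos.2 ht), show c - b - 1 + -a = c - a - b - 1 by ring]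

lemma one_sub_mul_rpow_mem_Icc_of_nonneg {p x t : ℝ} (hp : 0 ≤ p) (hx : x ∈ Icc (0:ℝ) 1)
    (ht : t ∈ Icc (0:ℝ) 1) : (1 - x * t) ^ p ∈ Icc ((1 - t) ^ p) 1 := by
  have hxt : x * t ≤ t := mul_le_of_le_one_left ht.1 hx.2
  have hxt0 : 0 ≤ x * t := mul_nonneg hx.1 ht.1
  exact ⟨rpow_le_rpow (by linarith [ht.2]) (by linarith) hp,
    rpow_le_one (by linarith [ht.2]) (by linarith) hp⟩

lemma one_sub_mul_rpow_mem_Icc_of_nonpos {p x t : ℝ} (hp : p ≤ 0) (hx : x ∈ Icc (0:ℝ) 1)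
    (ht : t ∈ Ico (0:ℝ) 1) : (1 - x * t) ^ p ∈ Icc 1 ((1 - t) ^ p) := by
  have hxt : x * t ≤ t := mul_le_of_le_one_left ht.1 hx.2
  have hxt0 : 0 ≤ x * t := mul_nonneg hx.1 ht.1
  exact ⟨one_le_rpow_of_pos_of_le_one_of_nonpos (by linarith [ht.2]) (by linarith) hp,
    rpow_le_rpow_of_nonpos (by linarith [ht.2]) (by linarith) hp⟩

/-- Gauss's closed form of `F(a, b; c; 1)`. -/
noncomputable def hyperAtOne (a b c : ℝ) : ℝ :=
  Gamma c * Gamma (c - a - b) / (Gamma (c - a) * Gamma (c - b))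

section Euler

variable {a b c x : ℝ}

lemma hyper_eq_integral_div_beta (hb : 0 < b) (hbc : b < c) :
    hyper a b c x = (∫ t in (0:ℝ)..1,
      t ^ (b - 1) * (1 - t) ^ (c - b - 1) * (1 - x * t) ^ (-a)) / beta b (c - b) := by
  rw [hyper, if_pos ⟨hbc, hb⟩, beta, add_sub_cancel, div_div_eq_mul_div, div_mul_eq_mul_div,
    mul_comm]

lemma intervalIntegrable_hyperIntegrand (hb : 0 < b) (hbc : b < c) (habc : a + b < c)
    (hx : x ∈ Icc (0:ℝ) 1) : IntervalIntegrable
      (fun t : ℝ => t ^ (b - 1) * (1 - t) ^ (c - b - 1) * (1 - x * t) ^ (-a)) volume 0 1 := by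
  have hw := intervalIntegrable_betaIntegrand hb (sub_pos.2 hbc)
  have hw' := intervalIntegrable_betaIntegrand hb (by linarith : 0 < c - a - b)
  refine (hw.add hw').mono_fun' (by fun_prop) ?_
  rw [uIoc_of_le zero_le_one, ← restrict_Ioo_eq_restrict_Ioc]
  refine ae_restrict_of_forall_mem measurableSet_Ioo fun t ht => ?_
  have hw_nonneg : 0 ≤ t ^ (b - 1) * (1 - t) ^ (c - b - 1) := betaIntegrand_nonneg ht
  have hk_le : (1 - x * t) ^ (-a) ≤ 1 + (1 - t) ^ (-a) := by
    rcases le_total 0 (-a) with ha | ha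
    · linarith [(one_sub_mul_rpow_mem_Icc_of_nonneg ha hx (Ioo_subset_Icc_self ht)).2,
        rpow_nonneg (sub_nonneg.2 ht.2.le) (-a)]
    · linarith [(one_sub_mul_rpow_mem_Icc_of_nonpos ha hx (Ioo_subset_Ico_self ht)).2]
  have hk_nonneg : 0 ≤ (1 - x * t) ^ (-a) :=
    rpow_nonneg (by nlinarith [ht.1, ht.2, hx.1, hx.2]) _
  dsimp only
  rw [norm_of_nonneg (mul_nonneg hw_nonneg hk_nonneg),
    ← betaIntegrand_mul_one_sub_rpow ht.2]
  nlinarith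

lemma integral_betaIntegrand_mul_one_sub_rpow (hb : 0 < b) (habc : a + b < c) :
    ∫ t in (0:ℝ)..1, t ^ (b - 1) * (1 - t) ^ (c - b - 1) * (1 - t) ^ (-a)
      = beta b (c - a - b) := by
  rw [intervalIntegral.integral_congr_Ioo_of_le zero_le_one
    fun t ht => betaIntegrand_mul_one_sub_rpow ht.2]
  exact integral_betaIntegrand hb (by linarith)

lemma intervalIntegrable_betaIntegrand_mul_one_sub_rpow (hb : 0 < b) (habc : a + b < c) :
    IntervalIntegrable
      (fun t : ℝ => t ^ (b - 1) * (1 - t) ^ (c - b - 1) * (1 - t) ^ (-a)) volume 0 1 :=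
  (intervalIntegrable_betaIntegrand hb (by linarith : 0 < c - a - b)).congr_uIoo
    fun t ht => by
      rw [uIoo_of_le zero_le_one] at ht
      exact (betaIntegrand_mul_one_sub_rpow ht.2).symm

lemma hyperAtOne_eq_beta_div_beta (hb : 0 < b) (hbc : b < c) (habc : a + b < c) :
    hyperAtOne a b c = beta b (c - a - b) / beta b (c - b) := by
  have := Gamma_pos_of_pos hb
  have := Gamma_pos_of_pos (sub_pos.2 hbc)
  have := Gamma_pos_of_pos (by linarith : 0 < c - a - b)
  have := Gamma_pos_of_pos (by linarith : 0 < c - a)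
  have := Gamma_pos_of_pos (by linarith : 0 < c)
  rw [hyperAtOne, beta, beta, add_sub_cancel, add_sub_cancel]
  field_simp

lemma hyper_mem_Icc_of_nonpos (hb : 0 < b) (hbc : b < c) (ha : a ≤ 0) (hx : x ∈ Icc (0:ℝ) 1) :
    hyper a b c x ∈ Icc (hyperAtOne a b c) 1 := by
  have habc : a + b < c := by linarith
  have hint := intervalIntegrable_hyperIntegrand hb hbc habc hx
  rw [hyper_eq_integral_div_beta hb hbc, hyperAtOne_eq_beta_div_beta hb hbc habc]
  have hβ := beta_pos hb (sub_pos.2 hbc)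
  refine ⟨div_le_div_of_nonneg_right ?_ hβ.le, (div_le_one hβ).2 ?_⟩
  · rw [← integral_betaIntegrand_mul_one_sub_rpow hb habc]
    refine intervalIntegral.integral_mono_on_of_le_Ioo zero_le_one
      (intervalIntegrable_betaIntegrand_mul_one_sub_rpow hb habc) hint fun t ht => ?_
    exact mul_le_mul_of_nonneg_left
      (one_sub_mul_rpow_mem_Icc_of_nonneg (neg_nonneg.2 ha) hx (Ioo_subset_Icc_self ht)).1
      (betaIntegrand_nonneg ht)
  · rw [← integral_betaIntegrand hb (sub_pos.2 hbc)]
    refine intervalIntegral.integral_mono_on_of_le_Ioo zero_le_one hint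
      (intervalIntegrable_betaIntegrand hb (sub_pos.2 hbc)) fun t ht => ?_
    exact mul_le_of_le_one_right (betaIntegrand_nonneg ht)
      (one_sub_mul_rpow_mem_Icc_of_nonneg (neg_nonneg.2 ha) hx (Ioo_subset_Icc_self ht)).2

lemma hyper_mem_Icc_of_nonneg (hb : 0 < b) (ha : 0 ≤ a) (habc : a + b < c)
    (hx : x ∈ Icc (0:ℝ) 1) : hyper a b c x ∈ Icc 1 (hyperAtOne a b c) := by
  have hbc : b < c := by linarith
  have hint := intervalIntegrable_hyperIntegrand hb hbc habc hx
  rw [hyper_eq_integral_div_beta hb hbc, hyperAtOne_eq_beta_div_beta hb hbc habc]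
  have hβ := beta_pos hb (sub_pos.2 hbc)
  refine ⟨(one_le_div hβ).2 ?_, div_le_div_of_nonneg_right ?_ hβ.le⟩
  · rw [← integral_betaIntegrand hb (sub_pos.2 hbc)]
    refine intervalIntegral.integral_mono_on_of_le_Ioo zero_le_one
      (intervalIntegrable_betaIntegrand hb (sub_pos.2 hbc)) hint fun t ht => ?_
    exact le_mul_of_one_le_right (betaIntegrand_nonneg ht)
      (one_sub_mul_rpow_mem_Icc_of_nonpos (neg_nonpos.2 ha) hx (Ioo_subset_Ico_self ht)).1
  · rw [← integral_betaIntegrand_mul_one_sub_rpow hb habc]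
    refine intervalIntegral.integral_mono_on_of_le_Ioo zero_le_one hint
      (intervalIntegrable_betaIntegrand_mul_one_sub_rpow hb habc) fun t ht => ?_
    exact mul_le_mul_of_nonneg_left
      (one_sub_mul_rpow_mem_Icc_of_nonpos (neg_nonpos.2 ha) hx (Ioo_subset_Ico_self ht)).2
      (betaIntegrand_nonneg ht)

end Euler

lemma Gamma_add_le_mul_rpow {x s : ℝ} (hx : 0 < x) (hs0 : 0 ≤ s) (hs1 : s ≤ 1) :
    Gamma (x + s) ≤ Gamma x * x ^ s := by
  have hΓ := Gamma_pos_of_pos hx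
  have hconv := convexOn_log_Gamma.2 (mem_Ioi.2 hx) (mem_Ioi.2 (by linarith : 0 < x + 1))
    (sub_nonneg.2 hs1) hs0 (sub_add_cancel 1 s)
  simp only [Function.comp_apply, smul_eq_mul, Gamma_add_one hx.ne',
    log_mul hx.ne' hΓ.ne'] at hconv
  rw [show (1 - s) * x + s * (x + 1) = x + s by ring] at hconv
  rw [← log_le_log_iff (Gamma_pos_of_pos (by linarith)) (by positivity),
    log_mul hΓ.ne' (by positivity), log_rpow hx]
  linarith

section GaussValue

variable {a b c m : ℝ}

lemma one_add_mul_rpow_le_hyperAtOne (ha0 : a ≤ 0) (ha1 : -1 < a) (hm : 1 ≤ m) (hc : 0 < c)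
    (hab : a + b = c - m) : (1 + a) * c ^ a ≤ hyperAtOne a b c := by
  have hcb : c - b = m + a := by linarith
  have hcab : c - a - b = m := by linarith
  have hΓc := Gamma_pos_of_pos hc
  have hΓm := Gamma_pos_of_pos (by linarith : 0 < m)
  have hΓma := Gamma_pos_of_pos (by linarith : 0 < m + a)
  have hca : Gamma (c - a) ≤ Gamma c * c ^ (-a) := by
    simpa only [sub_eq_add_neg] using Gamma_add_le_mul_rpow hc (neg_nonneg.2 ha0) (by linarith)
  have hma : (m + a) * Gamma (m + a) ≤ Gamma m * m := by
    rw [← Gamma_add_one (by linarith), show m + a + 1 = m + (1 + a) by ring]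
    calc Gamma (m + (1 + a)) ≤ Gamma m * m ^ (1 + a) :=
          Gamma_add_le_mul_rpow (by linarith) (by linarith) (by linarith)
      _ ≤ Gamma m * m := by gcongr; exact rpow_le_self_of_one_le hm (by linarith)
  have hm_step : (1 + a) * Gamma (m + a) ≤ Gamma m := by
    refine le_of_mul_le_mul_left ?_ (by linarith : 0 < m)
    nlinarith [mul_nonpos_of_nonpos_of_nonneg ha0 (by linarith : 0 ≤ m - 1)]
  have hcc : c ^ a * c ^ (-a) = 1 := by rw [rpow_neg hc.le, mul_inv_cancel₀ (by positivity)]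
  rw [hyperAtOne, hcb, hcab, le_div_iff₀ (mul_pos (Gamma_pos_of_pos (by linarith)) hΓma)]
  calc (1 + a) * c ^ a * (Gamma (c - a) * Gamma (m + a))
      ≤ (1 + a) * c ^ a * (Gamma c * c ^ (-a) * Gamma (m + a)) := by
        gcongr
        exact mul_nonneg (by linarith) (by positivity)
    _ = Gamma c * ((1 + a) * Gamma (m + a)) * (c ^ a * c ^ (-a)) := by ring
    _ ≤ Gamma c * Gamma m := by rw [hcc, mul_one]; gcongr

lemma one_sub_one_add_mul_rpow_le {a c : ℝ} (ha1 : -1 ≤ a) (hc : 1 ≤ c) :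
    1 - (1 + a) * c ^ a ≤ -a * (1 + log c) := by
  have hexp : 1 + a * log c ≤ c ^ a := by
    rw [rpow_def_of_pos (by linarith)]
    linarith [add_one_le_exp (log c * a), mul_comm a (log c)]
  nlinarith [mul_nonneg (by linarith : 0 ≤ 1 + a) (by linarith : 0 ≤ c ^ a - 1 - a * log c),
    mul_nonneg (sq_nonneg a) (log_nonneg hc)]

lemma abs_hyper_sub_one_le {x : ℝ} (ha0 : a ≤ 0) (ha1 : -1 < a) (hm : 1 ≤ m) (hb : 0 < b)
    (hc : 1 ≤ c) (hab : a + b = c - m) (hx : x ∈ Icc (0:ℝ) 1) :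
    |hyper a b c x - 1| ≤ -a * (1 + log c) := by
  have hF := hyper_mem_Icc_of_nonpos hb (by linarith) ha0 hx
  rw [abs_sub_comm, abs_of_nonneg (sub_nonneg.2 hF.2)]
  linarith [one_add_mul_rpow_le_hyperAtOne ha0 ha1 hm (by linarith) hab,
    one_sub_one_add_mul_rpow_le ha1.le hc, hF.1]

lemma hyperAtOne_add_one_le (ha0 : a ≤ 0) (ha1 : -1 < a) (hc : 3 ≤ c) (hab : a + b = c - 2) :
    hyperAtOne (a + 1) b c ≤ 2 * (c - 1) := by
  have hΓc : Gamma c ≤ (c - 1) * Gamma (c - 1 - a) := by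
    calc Gamma c = (c - 1) * Gamma (c - 1) := by
          rw [← Gamma_add_one (by linarith : c - 1 ≠ 0), sub_add_cancel]
      _ ≤ (c - 1) * Gamma (c - 1 - a) := by
          gcongr
          · linarith
          · exact Gamma_strictMonoOn_Ici.monotoneOn (mem_Ici.2 (by linarith))
              (mem_Ici.2 (by linarith)) (by linarith)
  have hΓ2a : 1 ≤ 2 * Gamma (2 + a) := by
    have hΓ := Gamma_pos_of_pos (by linarith : 0 < 2 + a)
    calc (1:ℝ) = Gamma (2 + a + -a) := by rw [add_neg_cancel_right, Gamma_two]
      _ ≤ Gamma (2 + a) * (2 + a) ^ (-a) :=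
          Gamma_add_le_mul_rpow (by linarith) (by linarith) (by linarith)
      _ ≤ Gamma (2 + a) * (2 + a) := by
          gcongr; exact rpow_le_self_of_one_le (by linarith) (by linarith)
      _ ≤ 2 * Gamma (2 + a) := by nlinarith
  have hΓca := Gamma_pos_of_pos (by linarith : 0 < c - 1 - a)
  rw [hyperAtOne, show c - (a + 1) - b = 1 by linarith, show c - (a + 1) = c - 1 - a by ring,
    show c - b = 2 + a by linarith, Gamma_one, mul_one,
    div_le_iff₀ (mul_pos hΓca (Gamma_pos_of_pos (by linarith)))]
  nlinarith [mul_le_mul_of_nonneg_left hΓ2a (mul_nonneg (by linarith : 0 ≤ c - 1) hΓca.le)]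

end GaussValue

lemma aCoef_add_bCoef (t : ℝ) : aCoef t + bCoef t = t := by
  rw [aCoef, bCoef]; ring

lemma aCoef_mem_Ioo {t : ℝ} (ht : 0 < t) : aCoef t ∈ Ioo (-(2 / t)) 0 := by
  have hsq : (t + 4 / t) ^ 2 = t ^ 2 + 8 + (4 / t) ^ 2 := by field_simp; ring
  have hlt : √(t ^ 2 + 8) < t + 4 / t :=
    (sqrt_lt' (by positivity)).2 (by nlinarith [sq_pos_of_pos (div_pos four_pos ht)])
  have hgt : t < √(t ^ 2 + 8) := lt_sqrt_of_sq_lt (by linarith)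
  constructor <;> rw [aCoef]
  · linarith [show 4 / t = 2 * (2 / t) by ring]
  · linarith

lemma neg_mul_one_add_log_le {n a c : ℝ} (hn : 2 ≤ n) (ha : -(2 / n) ≤ a) (hc1 : 1 ≤ c)
    (hc : c ≤ n + 3) : -a * (1 + log c) ≤ 10 * log n / n := by
  have hlogc : log c ≤ 3 * log n := by
    rw [← log_rpow (by linarith), rpow_ofNat]
    have hn2 : 4 ≤ n ^ 2 := by nlinarith
    exact log_le_log (by linarith)
      (by nlinarith [mul_le_mul_of_nonneg_left hn2 (by linarith : 0 ≤ n)])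
  have hlogn : 1 ≤ 2 * log n := by
    linarith [log_two_gt_d9, log_le_log two_pos hn]
  calc -a * (1 + log c) ≤ 2 / n * (5 * log n) := by
        gcongr
        · linarith [log_nonneg hc1]
        · linarith
        · linarith
    _ = 10 * log n / n := by ring

/-- uniform estimates on `[0,1]` for the hypergeometric functions
`F(a_n,b_n;n+1;·)`, `F(a_n+1,b_n;n+2;·)` and `F(a_n,b_n;n+3;·)`. -/
theorem hyper_uniform_estimates :
    ∃ C : ℝ, 0 < C ∧ ∀ n : ℕ, 2 ≤ n → ∀ x ∈ Icc (0:ℝ) 1,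
      |hyper (aCoef n) (bCoef n) ((n : ℝ) + 1) x - 1| ≤ C * Real.log n / n ∧
      1 ≤ hyper (aCoef n + 1) (bCoef n) ((n : ℝ) + 2) x ∧
      hyper (aCoef n + 1) (bCoef n) ((n : ℝ) + 2) x ≤ C * n ∧
      |hyper (aCoef n) (bCoef n) ((n : ℝ) + 3) x - 1| ≤ C * Real.log n / n := by
  refine ⟨10, by norm_num, fun n hn x hx => ?_⟩
  replace hn : (2:ℝ) ≤ n := by exact_mod_cast hn
  have hab := aCoef_add_bCoef n
  obtain ⟨ha_lo, ha0⟩ := aCoef_mem_Ioo (by linarith : (0:ℝ) < n)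
  have ha1 : -1 < aCoef n := by
    linarith [(div_le_one (by linarith : (0:ℝ) < n)).2 hn]
  have hb : 0 < bCoef n := by linarith
  have hF₂ := hyper_mem_Icc_of_nonneg (a := aCoef n + 1) (c := n + 2) hb (by linarith)
    (by linarith) hx
  refine ⟨?_, hF₂.1, ?_, ?_⟩
  · calc _ ≤ -aCoef n * (1 + log (n + 1)) :=
          abs_hyper_sub_one_le ha0.le ha1 le_rfl hb (by linarith) (by linarith) hx
      _ ≤ 10 * log n / n := neg_mul_one_add_log_le hn ha_lo.le (by linarith) (by linarith)
  · calc _ ≤ 2 * ((n : ℝ) + 2 - 1) :=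
          hF₂.2.trans (hyperAtOne_add_one_le ha0.le ha1 (by linarith) (by linarith))
      _ ≤ 10 * (n : ℝ) := by linarith
  · calc _ ≤ -aCoef n * (1 + log (n + 3)) :=
          abs_hyper_sub_one_le ha0.le ha1 (by norm_num : (1:ℝ) ≤ 3) hb (by linarith)
            (by linarith) hx
      _ ≤ 10 * log n / n := neg_mul_one_add_log_le hn ha_lo.le (by linarith) le_rfl
end

section
/- Let n≥1 be an integer. For every fixed x∈(0,1), the map c∈(b_n,∞)↦F(a_n,b_n;c;x) is strictly increasing, and for every fixed x∈(−∞,0) it is strictly decreasing. -/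
open MeasureTheory Real Set

/-! For `0 < b < c`, Euler's integral exhibits `F(a,b;c;x)` as the mean of
`g(t) = (1 - x t)^(-a)` under the Beta`(b, c - b)` distribution. Raising `c` to `c'` multiplies
the Beta density by the decreasing factor `(1 - t)^(c' - c)` (up to normalisation), so by
Chebyshev's integral inequality the mean of a decreasing `g` goes up and the mean of an
increasing `g` goes down. Since `a_n < 0`, `g` is decreasing on `(0,1)` when `x > 0` and
increasing when `x < 0`. -/

section Chebyshev

variable {α : Type*} {p φ g : α → ℝ}

def chebyshevKernel (p φ g : α → ℝ) (z : α × α) : ℝ :=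
  p z.1 * p z.2 * ((φ z.1 - φ z.2) * (g z.1 - g z.2))

lemma chebyshevKernel_eq : chebyshevKernel p φ g =
    (fun z => p z.1 * φ z.1 * g z.1 * p z.2) - (fun z => p z.1 * φ z.1 * (p z.2 * g z.2))
      - (fun z => p z.1 * g z.1 * (p z.2 * φ z.2))
      + (fun z => p z.1 * (p z.2 * φ z.2 * g z.2)) := by
  funext z
  simp only [chebyshevKernel, Pi.add_apply, Pi.sub_apply]
  ring

lemma integrable_chebyshevKernel [MeasurableSpace α] {μ : Measure α} [SFinite μ]
    (hp : Integrable p μ) (hpφ : Integrable (fun t => p t * φ t) μ)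
    (hpg : Integrable (fun t => p t * g t) μ)
    (hpφg : Integrable (fun t => p t * φ t * g t) μ) :
    Integrable (chebyshevKernel p φ g) (μ.prod μ) := by
  rw [chebyshevKernel_eq]
  exact (((hpφg.mul_prod hp).sub (hpφ.mul_prod hpg)).sub (hpg.mul_prod hpφ)).add
    (hp.mul_prod hpφg)

lemma integral_chebyshevKernel [MeasurableSpace α] {μ : Measure α} [SFinite μ]
    (hp : Integrable p μ) (hpφ : Integrable (fun t => p t * φ t) μ)
    (hpg : Integrable (fun t => p t * g t) μ)
    (hpφg : Integrable (fun t => p t * φ t * g t) μ) :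
    ∫ z, chebyshevKernel p φ g z ∂μ.prod μ =
      2 * ((∫ t, p t * φ t * g t ∂μ) * (∫ t, p t ∂μ)
        - (∫ t, p t * g t ∂μ) * ∫ t, p t * φ t ∂μ) := by
  have h₁ := hpφg.mul_prod hp
  have h₂ := hpφ.mul_prod hpg
  have h₃ := hpg.mul_prod hpφ
  rw [chebyshevKernel_eq, integral_add' ((h₁.sub h₂).sub h₃) (hp.mul_prod hpφg),
    integral_sub' (h₁.sub h₂) h₃, integral_sub' h₁ h₂,
    integral_prod_mul (fun t => p t * φ t * g t) p,
    integral_prod_mul (fun t => p t * φ t) (fun t => p t * g t),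
    integral_prod_mul (fun t => p t * g t) (fun t => p t * φ t),
    integral_prod_mul p (fun t => p t * φ t * g t)]
  ring

end Chebyshev

theorem integral_mul_integral_lt_of_strictAntiOn {l u : ℝ} {p φ g : ℝ → ℝ} (hlu : l < u)
    (hp : ∀ t ∈ Ioo l u, 0 < p t) (hφ : StrictAntiOn φ (Ioo l u))
    (hg : StrictAntiOn g (Ioo l u)) (hp_int : IntegrableOn p (Ioo l u))
    (hpφ_int : IntegrableOn (fun t => p t * φ t) (Ioo l u))
    (hpg_int : IntegrableOn (fun t => p t * g t) (Ioo l u))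
    (hpφg_int : IntegrableOn (fun t => p t * φ t * g t) (Ioo l u)) :
    (∫ t in Ioo l u, p t * g t) * (∫ t in Ioo l u, p t * φ t) <
      (∫ t in Ioo l u, p t * φ t * g t) * ∫ t in Ioo l u, p t := by
  have hK_pos_of_lt : ∀ t ∈ Ioo l u, ∀ s ∈ Ioo l u, t < s → 0 < chebyshevKernel p φ g (t, s) :=
    fun t ht s hs hts => mul_pos (mul_pos (hp t ht) (hp s hs))
      (mul_pos (sub_pos.2 (hφ ht hs hts)) (sub_pos.2 (hg ht hs hts)))
  have hK_nonneg : ∀ z ∈ Ioo l u ×ˢ Ioo l u, 0 ≤ chebyshevKernel p φ g z := by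
    rintro ⟨t, s⟩ ⟨ht, hs⟩
    rcases lt_trichotomy t s with hts | rfl | hst
    · exact (hK_pos_of_lt t ht s hs hts).le
    · simp [chebyshevKernel]
    · have h := hK_pos_of_lt s hs t ht hst
      simp only [chebyshevKernel] at h ⊢
      linarith
  obtain ⟨m, hlm, hmu⟩ := exists_between hlu
  have hK_support : Ioo l m ×ˢ Ioo m u ⊆ Function.support (chebyshevKernel p φ g) := by
    rintro ⟨t, s⟩ ⟨ht, hs⟩
    exact (hK_pos_of_lt t ⟨ht.1, ht.2.trans hmu⟩ s ⟨hlm.trans hs.1, hs.2⟩ (ht.2.trans hs.1)).ne'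
  have hK_integral_pos : 0 < ∫ z, chebyshevKernel p φ g z ∂(volume.restrict (Ioo l u)).prod
      (volume.restrict (Ioo l u)) := by
    refine (integral_pos_iff_support_of_nonneg_ae ?_
      (integrable_chebyshevKernel hp_int hpφ_int hpg_int hpφg_int)).2 ?_
    · rw [Measure.prod_restrict]
      exact ae_restrict_of_forall_mem (measurableSet_Ioo.prod measurableSet_Ioo) hK_nonneg
    · refine lt_of_lt_of_le ?_ (measure_mono hK_support)
      rw [Measure.prod_prod, Measure.restrict_apply measurableSet_Ioo,
        Measure.restrict_apply measurableSet_Ioo, inter_eq_left.2 (Ioo_subset_Ioo_right hmu.le),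
        inter_eq_left.2 (Ioo_subset_Ioo_left hlm.le), Real.volume_Ioo, Real.volume_Ioo]
      exact ENNReal.mul_pos (ENNReal.ofReal_pos.2 (sub_pos.2 hlm)).ne'
        (ENNReal.ofReal_pos.2 (sub_pos.2 hmu)).ne'
  rw [integral_chebyshevKernel hp_int hpφ_int hpg_int hpφg_int] at hK_integral_pos
  linarith

section BetaWeight

variable {u v : ℝ}

lemma ofReal_betaWeight {t : ℝ} (ht : t ∈ Icc (0:ℝ) 1) :
    ((t ^ (u - 1) * (1 - t) ^ (v - 1) : ℝ) : ℂ)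
      = (t : ℂ) ^ ((u : ℂ) - 1) * (1 - (t : ℂ)) ^ ((v : ℂ) - 1) := by
  rw [Complex.ofReal_mul, Complex.ofReal_cpow ht.1, Complex.ofReal_cpow (sub_nonneg.2 ht.2)]
  push_cast
  ring

lemma integrableOn_betaWeight (hu : 0 < u) (hv : 0 < v) :
    IntegrableOn (fun t : ℝ => t ^ (u - 1) * (1 - t) ^ (v - 1)) (Icc 0 1) := by
  have h := Complex.betaIntegral_convergent (u := u) (v := v) (by simpa) (by simpa)
  rw [intervalIntegrable_iff_integrableOn_Ioc_of_le zero_le_one] at h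
  rw [integrableOn_Icc_iff_integrableOn_Ioc]
  refine IntegrableOn.congr_fun h.re (fun t ht => ?_) measurableSet_Ioc
  simp only [← ofReal_betaWeight (Ioc_subset_Icc_self ht), RCLike.re_to_complex, Complex.ofReal_re]

lemma integrableOn_betaWeight_mul (hu : 0 < u) (hv : 0 < v) {ρ : ℝ → ℝ}
    (hρ : ContinuousOn ρ (Icc 0 1)) :
    IntegrableOn (fun t : ℝ => t ^ (u - 1) * (1 - t) ^ (v - 1) * ρ t) (Ioo 0 1) :=
  ((integrableOn_betaWeight hu hv).mul_continuousOn hρ isCompact_Icc).mono_set Ioo_subset_Icc_self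

lemma integral_betaWeight (hu : 0 < u) (hv : 0 < v) :
    ∫ t in Ioo (0:ℝ) 1, t ^ (u - 1) * (1 - t) ^ (v - 1) = ProbabilityTheory.beta u v := by
  rw [ProbabilityTheory.beta_eq_betaIntegralReal u v hu hv, Complex.betaIntegral,
    intervalIntegral.integral_of_le zero_le_one, integral_Ioc_eq_integral_Ioo,
    ← setIntegral_congr_fun measurableSet_Ioo fun t ht =>
      ofReal_betaWeight (Ioo_subset_Icc_self ht),
    integral_complex_ofReal, Complex.ofReal_re]

end BetaWeight

noncomputable def betaMean (u v : ℝ) (g : ℝ → ℝ) : ℝ :=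
  (∫ t in Ioo (0:ℝ) 1, t ^ (u - 1) * (1 - t) ^ (v - 1) * g t) /
    ∫ t in Ioo (0:ℝ) 1, t ^ (u - 1) * (1 - t) ^ (v - 1)

lemma betaMean_neg (u v : ℝ) (g : ℝ → ℝ) : betaMean u v (-g) = -betaMean u v g := by
  simp only [betaMean, Pi.neg_apply, mul_neg, integral_neg, neg_div]

theorem strictMonoOn_betaMean {u : ℝ} {g : ℝ → ℝ} (hu : 0 < u)
    (hg_cont : ContinuousOn g (Icc 0 1)) (hg : StrictAntiOn g (Ioo 0 1)) :
    StrictMonoOn (fun v => betaMean u v g) (Ioi 0) := by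
  intro v₁ hv₁ v₂ hv₂ hv
  set p : ℝ → ℝ := fun t => t ^ (u - 1) * (1 - t) ^ (v₁ - 1)
  set φ : ℝ → ℝ := fun t => (1 - t) ^ (v₂ - v₁)
  have hweight : ∀ t ∈ Ioo (0:ℝ) 1, t ^ (u - 1) * (1 - t) ^ (v₂ - 1) = p t * φ t := by
    intro t ht
    rw [mul_assoc, ← rpow_add (sub_pos.2 ht.2), sub_add_sub_cancel']
  have hφ_cont : ContinuousOn φ (Icc 0 1) :=
    (continuousOn_const.sub continuousOn_id).rpow_const fun _ _ => Or.inr (sub_pos.2 hv).le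
  have hφ : StrictAntiOn φ (Ioo 0 1) := fun t _ s hs hts =>
    rpow_lt_rpow (sub_pos.2 hs.2).le (by linarith) (sub_pos.2 hv)
  have hmean₂ : betaMean u v₂ g = (∫ t in Ioo (0:ℝ) 1, p t * φ t * g t) /
      ∫ t in Ioo (0:ℝ) 1, p t * φ t := by
    rw [betaMean, setIntegral_congr_fun measurableSet_Ioo fun t ht => by rw [hweight t ht],
      setIntegral_congr_fun measurableSet_Ioo hweight]
  have hp_int : IntegrableOn p (Ioo 0 1) :=
    (integrableOn_betaWeight hu hv₁).mono_set Ioo_subset_Icc_self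
  have hpφg_int : IntegrableOn (fun t => p t * φ t * g t) (Ioo 0 1) :=
    (integrableOn_betaWeight_mul hu hv₁ (hφ_cont.mul hg_cont)).congr_fun
      (fun t _ => (mul_assoc _ _ _).symm) measurableSet_Ioo
  have hpφ_pos : 0 < ∫ t in Ioo (0:ℝ) 1, p t * φ t := by
    rw [← setIntegral_congr_fun measurableSet_Ioo hweight, integral_betaWeight hu hv₂]
    exact ProbabilityTheory.beta_pos hu hv₂
  have hp_pos : 0 < ∫ t in Ioo (0:ℝ) 1, p t :=
    (integral_betaWeight hu hv₁).symm ▸ ProbabilityTheory.beta_pos hu hv₁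
  show (∫ t in Ioo (0:ℝ) 1, p t * g t) / (∫ t in Ioo (0:ℝ) 1, p t) < betaMean u v₂ g
  rw [hmean₂, div_lt_div_iff₀ hp_pos hpφ_pos]
  exact integral_mul_integral_lt_of_strictAntiOn zero_lt_one
    (fun t ht => mul_pos (rpow_pos_of_pos ht.1 _) (rpow_pos_of_pos (sub_pos.2 ht.2) _)) hφ hg
    hp_int (integrableOn_betaWeight_mul hu hv₁ hφ_cont)
    (integrableOn_betaWeight_mul hu hv₁ hg_cont) hpφg_int

theorem strictAntiOn_betaMean {u : ℝ} {g : ℝ → ℝ} (hu : 0 < u)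
    (hg_cont : ContinuousOn g (Icc 0 1)) (hg : StrictMonoOn g (Ioo 0 1)) :
    StrictAntiOn (fun v => betaMean u v g) (Ioi 0) := by
  intro v₁ hv₁ v₂ hv₂ hv
  simpa only [betaMean_neg, neg_lt_neg_iff] using
    strictMonoOn_betaMean hu hg_cont.neg hg.neg hv₁ hv₂ hv

section Hyper

variable {a b x : ℝ}

lemma hyper_eq_betaMean {c : ℝ} (hb : 0 < b) (hbc : b < c) :
    hyper a b c x = betaMean b (c - b) (fun t => (1 - x * t) ^ (-a)) := by
  rw [hyper, if_pos ⟨hbc, hb⟩, betaMean, integral_betaWeight hb (sub_pos.2 hbc),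
    ProbabilityTheory.beta, add_sub_cancel, intervalIntegral.integral_of_le zero_le_one,
    integral_Ioc_eq_integral_Ioo, div_div_eq_mul_div]
  ring

theorem strictMonoOn_hyper (hb : 0 < b)
    (hg_cont : ContinuousOn (fun t => (1 - x * t) ^ (-a)) (Icc 0 1))
    (hg : StrictAntiOn (fun t => (1 - x * t) ^ (-a)) (Ioo 0 1)) :
    StrictMonoOn (fun c => hyper a b c x) (Ioi b) := by
  intro c₁ hc₁ c₂ hc₂ hc
  simp only [hyper_eq_betaMean hb hc₁, hyper_eq_betaMean hb hc₂]
  exact strictMonoOn_betaMean hb hg_cont hg (sub_pos.2 hc₁ : 0 < c₁ - b)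
    (sub_pos.2 hc₂ : 0 < c₂ - b) (sub_lt_sub_right hc b)

theorem strictAntiOn_hyper (hb : 0 < b)
    (hg_cont : ContinuousOn (fun t => (1 - x * t) ^ (-a)) (Icc 0 1))
    (hg : StrictMonoOn (fun t => (1 - x * t) ^ (-a)) (Ioo 0 1)) :
    StrictAntiOn (fun c => hyper a b c x) (Ioi b) := by
  intro c₁ hc₁ c₂ hc₂ hc
  simp only [hyper_eq_betaMean hb hc₁, hyper_eq_betaMean hb hc₂]
  exact strictAntiOn_betaMean hb hg_cont hg (sub_pos.2 hc₁ : 0 < c₁ - b)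
    (sub_pos.2 hc₂ : 0 < c₂ - b) (sub_lt_sub_right hc b)

end Hyper

lemma strictAntiOn_one_sub_mul_rpow {x e : ℝ} (hx₀ : 0 < x) (hx₁ : x ≤ 1) (he : 0 < e) :
    StrictAntiOn (fun t => (1 - x * t) ^ e) (Ioo 0 1) := fun t _ s hs hts =>
  rpow_lt_rpow (by nlinarith [hs.2]) (by nlinarith) he

lemma strictMonoOn_one_sub_mul_rpow {x e : ℝ} (hx : x < 0) (he : 0 < e) :
    StrictMonoOn (fun t => (1 - x * t) ^ e) (Ioo 0 1) := fun t ht _ _ hts =>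
  rpow_lt_rpow (by nlinarith [ht.1]) (by nlinarith) he

lemma aCoef_neg (t : ℝ) : aCoef t < 0 := by
  have : t < √(t ^ 2 + 8) := lt_sqrt_of_sq_lt (by linarith)
  rw [aCoef]; linarith

lemma bCoef_pos (t : ℝ) : 0 < bCoef t := by
  have : -t < √(t ^ 2 + 8) := lt_sqrt_of_sq_lt (by nlinarith)
  rw [bCoef]; linarith

theorem hyper_monotone_in_c_general (n : ℕ) :
    (∀ x ∈ Ioo (0:ℝ) 1,
      StrictMonoOn (fun c : ℝ => hyper (aCoef n) (bCoef n) c x) (Ioi (bCoef n))) ∧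
    (∀ x : ℝ, x < 0 →
      StrictAntiOn (fun c : ℝ => hyper (aCoef n) (bCoef n) c x) (Ioi (bCoef n))) := by
  have ha : 0 < -aCoef n := neg_pos.2 (aCoef_neg n)
  have hg_cont : ∀ x : ℝ, ContinuousOn (fun t => (1 - x * t) ^ (-aCoef n)) (Icc 0 1) := fun x =>
    ((continuous_const.sub (continuous_const.mul continuous_id)).rpow_const
      fun _ => Or.inr ha.le).continuousOn
  exact ⟨fun x hx => strictMonoOn_hyper (bCoef_pos n) (hg_cont x)
      (strictAntiOn_one_sub_mul_rpow hx.1 hx.2.le ha),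
    fun x hx => strictAntiOn_hyper (bCoef_pos n) (hg_cont x) (strictMonoOn_one_sub_mul_rpow hx ha)⟩

/-- monotonicity of the hypergeometric function `F(a_n,b_n;c;x)` with respect
to the third parameter `c ∈ (b_n,∞)`: strictly increasing for `x ∈ (0,1)` and strictly
decreasing for `x ∈ (-∞,0)`. -/
theorem hyper_monotone_in_c (n : ℕ) (hn : 1 ≤ n) :
    (∀ x ∈ Ioo (0:ℝ) 1,
      StrictMonoOn (fun c : ℝ => hyper (aCoef n) (bCoef n) c x) (Ioi (bCoef n))) ∧
    (∀ x : ℝ, x < 0 →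
      StrictAntiOn (fun c : ℝ => hyper (aCoef n) (bCoef n) c x) (Ioi (bCoef n))) :=
  hyper_monotone_in_c_general n
end
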